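/- Let 𝒜 be a commutative Banach algebra and let I be a nonzero closed ideal of 𝒜 possessing a bounded approximate identity. Then every weakly almost periodic functional on I is uniformly continuous: WAP(I) ⊆ UCB(I). -/

import Mathlib

open NormedSpace Filter

/-- The dual module action: `⟨u·T, v⟩ = ⟨T, v * u⟩`. -/
noncomputable def dualAct {A : Type*} [NormedCommRing A] [NormedAlgebra ℂ A]
    (u : A) (T : StrongDual ℂ A) : StrongDual ℂ A :=
  T.comp ((ContinuousLinearMap.mul ℂ A).flip u)

/-- `T` is weakly almost periodic. -/
def IsWAP {A : Type*} [NormedCommRing A] [NormedAlgebra ℂ A] (T : StrongDual ℂ A) : Prop :=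
  IsCompact (closure (toWeakSpace ℂ (StrongDual ℂ A) ''
    {S : StrongDual ℂ A | ∃ u : A, ‖u‖ ≤ 1 ∧ S = dualAct u T}))

/-- `UCB(I)`: the norm-closed linear span of `{u·T : u ∈ I, T ∈ I*}`. -/
noncomputable def UCB (A : Type*) [NormedCommRing A] [NormedAlgebra ℂ A] : Set (StrongDual ℂ A) :=
  closure (Submodule.span ℂ
    {S : StrongDual ℂ A | ∃ (v : A) (T : StrongDual ℂ A), S = dualAct v T} : Set (StrongDual ℂ A))

open Topology

/-!
Rescale the bounded approximate identity `(u i)` into the unit ball. Relative weak compactness of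
the orbit of `T` then gives a weak cluster point `x` of the net `u i · T`. Since `u i * v → v`, this
net converges weak* to `T` (up to the scaling), and the weak topology of `I*` is finer than the
weak* topology, so `x` is that multiple of `T`. The net lies in the span of `I · I*`, and by
Mazur's theorem the weak closure of a subspace is its norm closure, which is `UCB(I)`.
-/

section WeakTopology

variable {𝕜 E : Type*} [RCLike 𝕜] [NormedAddCommGroup E] [NormedSpace 𝕜 E]

theorem Submodule.mem_topologicalClosure_of_mem_weakClosure [NormedSpace ℝ E]
    [IsScalarTower ℝ 𝕜 E] {M : Submodule 𝕜 E} {x : E}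
    (hx : toWeakSpace 𝕜 E x ∈ closure (toWeakSpace 𝕜 E '' M)) : x ∈ M.topologicalClosure := by
  have hM : Convex ℝ (M : Set E) := (M.restrictScalars ℝ).convex
  rw [← hM.toWeakSpace_closure 𝕜] at hx
  obtain ⟨y, hy, hyx⟩ := hx
  rwa [← (toWeakSpace 𝕜 E).injective hyx]

theorem StrongDual.continuous_toWeakDual_ofWeakSpace :
    Continuous fun x : WeakSpace 𝕜 (StrongDual 𝕜 E) =>
      StrongDual.toWeakDual ((toWeakSpace 𝕜 (StrongDual 𝕜 E)).symm x) :=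
  WeakDual.continuous_of_continuous_eval fun v =>
    WeakBilin.eval_continuous _ (inclusionInDoubleDual 𝕜 E v)

theorem StrongDual.eq_of_mapClusterPt_of_tendsto_apply {ι : Type*} {l : Filter ι}
    {S : ι → StrongDual 𝕜 E} {T : StrongDual 𝕜 E} {x : WeakSpace 𝕜 (StrongDual 𝕜 E)}
    (hS : ∀ v, Tendsto (fun i => S i v) l (𝓝 (T v)))
    (hx : MapClusterPt x l fun i => toWeakSpace 𝕜 _ (S i)) :
    x = toWeakSpace 𝕜 _ T := by
  have hS' : Tendsto (fun i => StrongDual.toWeakDual (S i)) l (𝓝 (StrongDual.toWeakDual T)) :=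
    (WeakBilin.tendsto_iff_forall_eval_tendsto _ ContinuousLinearMap.coe_injective).2 hS
  have hxT := eq_of_nhds_neBot <|
    (hx.continuousAt_comp continuous_toWeakDual_ofWeakSpace.continuousAt).clusterPt.mono hS'
  rw [← (toWeakSpace 𝕜 _).apply_symm_apply x, (StrongDual.toWeakDual_inj _ _).1 hxT]

end WeakTopology

section DualAction

variable {A : Type*} [NormedCommRing A] [NormedAlgebra ℂ A]

theorem dualAct_apply (u : A) (T : StrongDual ℂ A) (v : A) : dualAct u T v = T (v * u) := rfl

theorem dualAct_smul (c : ℂ) (u : A) (T : StrongDual ℂ A) :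
    dualAct (c • u) T = c • dualAct u T := by
  ext v
  simp [dualAct_apply]

variable (A) in
noncomputable def ucbSpan : Submodule ℂ (StrongDual ℂ A) :=
  Submodule.span ℂ {S : StrongDual ℂ A | ∃ (v : A) (T : StrongDual ℂ A), S = dualAct v T}

variable (A) in
theorem UCB_eq_topologicalClosure : UCB A = (ucbSpan A).topologicalClosure := rfl

theorem dualAct_mem_ucbSpan (u : A) (T : StrongDual ℂ A) : dualAct u T ∈ ucbSpan A :=
  Submodule.subset_span ⟨u, T, rfl⟩

theorem tendsto_dualAct_apply {ι : Type*} {l : Filter ι} {u : ι → A}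
    (hu : ∀ v, Tendsto (fun i => u i * v) l (𝓝 v)) (T : StrongDual ℂ A) (v : A) :
    Tendsto (fun i => dualAct (u i) T v) l (𝓝 (T v)) := by
  simpa only [dualAct_apply, mul_comm v, Function.comp_def] using
    (T.continuous.tendsto v).comp (hu v)

theorem IsWAP.exists_mapClusterPt {T : StrongDual ℂ A} (hT : IsWAP T) {ι : Type*}
    {l : Filter ι} [l.NeBot] {u : ι → A} (hu : ∀ i, ‖u i‖ ≤ 1) :
    ∃ x, MapClusterPt x l fun i => toWeakSpace ℂ _ (dualAct (u i) T) := by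
  obtain ⟨x, -, hx⟩ := IsCompact.exists_clusterPt hT <| tendsto_principal.2 <|
    .of_forall (f := l) fun i => subset_closure ⟨_, ⟨u i, hu i, rfl⟩, rfl⟩
  exact ⟨x, hx⟩

end DualAction

theorem WAP_subset_UCB_of_bai_general
    (I : Type*) [NormedCommRing I] [NormedAlgebra ℂ I]
    (bai : ∃ (ι : Type) (l : Filter ι) (u : ι → I), l.NeBot ∧ (∃ C : ℝ, ∀ i, ‖u i‖ ≤ C) ∧
      ∀ v : I, Tendsto (fun i => u i * v) l (nhds v))
    (T : StrongDual ℂ I) (hT : IsWAP T) : T ∈ UCB I := by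
  obtain ⟨ι, l, u, hl, ⟨C, hC⟩, hu⟩ := bai
  have := hl
  set c : ℝ := max C 1
  have hc : 0 < c := one_pos.trans_le (le_max_right _ _)
  have hw : ∀ i, ‖(c : ℂ)⁻¹ • u i‖ ≤ 1 := fun i => by
    rw [norm_smul, norm_inv, Complex.norm_real, Real.norm_of_nonneg hc.le, inv_mul_le_one₀ hc]
    exact (hC i).trans (le_max_left _ _)
  obtain ⟨x, hx⟩ := hT.exists_mapClusterPt (l := l) hw
  have hxT : x = toWeakSpace ℂ _ ((c : ℂ)⁻¹ • T) :=
    StrongDual.eq_of_mapClusterPt_of_tendsto_apply (fun v => by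
      simpa only [dualAct_smul, smul_apply] using
        (tendsto_dualAct_apply hu T v).const_smul (c : ℂ)⁻¹) hx
  have hxM : x ∈ closure (toWeakSpace ℂ _ '' ucbSpan I) :=
    isClosed_closure.mem_of_mapClusterPt hx <|
      Eventually.of_forall fun i => subset_closure ⟨_, dualAct_mem_ucbSpan _ T, rfl⟩
  rw [hxT] at hxM
  have hc' : (c : ℂ) ≠ 0 := by exact_mod_cast hc.ne'
  rw [UCB_eq_topologicalClosure, ← smul_inv_smul₀ hc' T]
  exact Submodule.smul_mem _ _ (Submodule.mem_topologicalClosure_of_mem_weakClosure hxM)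

/-- if the (nonzero, closed) ideal `I`, viewed as a commutative Banach algebra
in its own right, has a bounded approximate identity, then `WAP(I) ⊆ UCB(I)`. -/
theorem WAP_subset_UCB_of_bai
    (I : Type*) [NormedCommRing I] [NormedAlgebra ℂ I] [CompleteSpace I] [Nontrivial I]
    (bai : ∃ (ι : Type) (l : Filter ι) (u : ι → I), l.NeBot ∧ (∃ C : ℝ, ∀ i, ‖u i‖ ≤ C) ∧
      ∀ v : I, Tendsto (fun i => u i * v) l (nhds v))
    (T : StrongDual ℂ I) (hT : IsWAP T) : T ∈ UCB I :=
  WAP_subset_UCB_of_bai_general I bai T hT
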